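/- arXiv:2303.13848 — 5 statements merged into one kernel-verified Lean document; each statement's English description precedes it below -/
import Mathlib

section
/- Consider the steady-state system 0 = α₁x₄ − δ_V x₁, 0 = α_C x₂(1 − (x₂+x₃+x₄)/K) − γ₁x₂x₁ − δ_C x₂, 0 = γ₁x₂x₁ − ν₁x₃ − δ_{CV}x₃, 0 = ν₁x₃ − β₁x₄ with all parameters positive. If α_C ≤ δ_C, then the only non-negative solution is (0,0,0,0). -/
theorem stmt_0 (α₁ δV αC K γ₁ δC ν₁ δCV β₁ : ℝ)
    (hα₁ : 0 < α₁) (hδV : 0 < δV) (hαC : 0 < αC) (hK : 0 < K) (hγ₁ : 0 < γ₁)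
    (hδC : 0 < δC) (hν₁ : 0 < ν₁) (hδCV : 0 < δCV) (hβ₁ : 0 < β₁)
    (hle : αC ≤ δC)
    (x₁ x₂ x₃ x₄ : ℝ)
    (h1 : 0 ≤ x₁) (h2 : 0 ≤ x₂) (h3 : 0 ≤ x₃) (h4 : 0 ≤ x₄)
    (e1 : 0 = α₁ * x₄ - δV * x₁)
    (e2 : 0 = αC * x₂ * (1 - (x₂ + x₃ + x₄) / K) - γ₁ * x₂ * x₁ - δC * x₂)
    (e3 : 0 = γ₁ * x₂ * x₁ - ν₁ * x₃ - δCV * x₃)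
    (e4 : 0 = ν₁ * x₃ - β₁ * x₄) :
    x₁ = 0 ∧ x₂ = 0 ∧ x₃ = 0 ∧ x₄ = 0 := by
  have key : αC * x₂ * (1 - (x₂ + x₃ + x₄) / K) - γ₁ * x₂ * x₁ - δC * x₂
      = (αC * x₂ * (K - (x₂ + x₃ + x₄)) - (γ₁ * x₂ * x₁ + δC * x₂) * K) / K := by
    field_simp
    ring
  have e2'' : 0 = αC * x₂ * (K - (x₂ + x₃ + x₄)) - (γ₁ * x₂ * x₁ + δC * x₂) * K := by
    rw [key] at e2
    have := (div_eq_zero_iff.mp e2.symm).resolve_right hK.ne'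
    linarith
  have hx2 : x₂ = 0 := by
    by_contra h
    have hx2pos : 0 < x₂ := lt_of_le_of_ne h2 (Ne.symm h)
    nlinarith [mul_pos hαC (mul_pos hx2pos hx2pos),
      mul_nonneg (mul_nonneg hαC.le h2) h3,
      mul_nonneg (mul_nonneg hαC.le h2) h4,
      mul_nonneg (mul_nonneg (sub_nonneg.mpr hle) h2) hK.le,
      mul_nonneg (mul_nonneg (mul_nonneg hγ₁.le h2) h1) hK.le]
  have hx3 : x₃ = 0 := by
    rw [hx2] at e3
    nlinarith
  have hx4 : x₄ = 0 := by
    rw [hx3] at e4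
    nlinarith
  have hx1 : x₁ = 0 := by
    rw [hx4] at e1
    nlinarith
  exact ⟨hx1, hx2, hx3, hx4⟩
end

section
/- Consider the steady-state system 0 = α₁x₄ − δ_V x₁, 0 = α_C x₂(1 − (x₂+x₃+x₄)/K) − γ₁x₂x₁ − δ_C x₂, 0 = γ₁x₂x₁ − ν₁x₃ − δ_{CV}x₃, 0 = ν₁x₃ − β₁x₄ with positive parameters. Let Z = δ_V β₁(δ_{CV}+ν₁)/(γ₁α₁ν₁). If α_C(1 − Z/K) ≤ δ_C < α_C, then the set of non-negative solutions is exactly {(0,0,0,0), (0, K(α_C − δ_C)/α_C, 0, 0)}. -/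
set_option maxHeartbeats 1000000


theorem stmt_1 (α₁ δV αC K γ₁ δC ν₁ δCV β₁ : ℝ)
    (hα₁ : 0 < α₁) (hδV : 0 < δV) (hαC : 0 < αC) (hK : 0 < K) (hγ₁ : 0 < γ₁)
    (hδC : 0 < δC) (hν₁ : 0 < ν₁) (hδCV : 0 < δCV) (hβ₁ : 0 < β₁)
    (Z : ℝ) (hZ : Z = δV * β₁ * (δCV + ν₁) / (γ₁ * α₁ * ν₁))
    (hlow : αC * (1 - Z / K) ≤ δC) (hup : δC < αC) :
    {p : ℝ × ℝ × ℝ × ℝ |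
        0 ≤ p.1 ∧ 0 ≤ p.2.1 ∧ 0 ≤ p.2.2.1 ∧ 0 ≤ p.2.2.2 ∧
        0 = α₁ * p.2.2.2 - δV * p.1 ∧
        0 = αC * p.2.1 * (1 - (p.2.1 + p.2.2.1 + p.2.2.2) / K) - γ₁ * p.2.1 * p.1 - δC * p.2.1 ∧
        0 = γ₁ * p.2.1 * p.1 - ν₁ * p.2.2.1 - δCV * p.2.2.1 ∧
        0 = ν₁ * p.2.2.1 - β₁ * p.2.2.2} =
      {(0, 0, 0, 0), (0, K * (αC - δC) / αC, 0, 0)} := by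
  have hK' : K ≠ 0 := hK.ne'
  have hαC' : αC ≠ 0 := hαC.ne'
  ext ⟨a, b, c, d⟩
  simp only [Set.mem_setOf_eq, Set.mem_insert_iff, Set.mem_singleton_iff, Prod.mk.injEq]
  constructor
  · rintro ⟨ha, hb, hc, hd, e1, e2, e3, e4⟩
    have hdivσ : (b + c + d) / K * K = b + c + d := div_mul_cancel₀ _ hK'
    rcases eq_or_lt_of_le hb with hb0 | hb0
    · left
      have hb0' : b = 0 := hb0.symm
      subst hb0'
      have hc0 : c = 0 := by nlinarith
      have hd0 : d = 0 := by nlinarith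
      have ha0 : a = 0 := by nlinarith
      exact ⟨ha0, rfl, hc0, hd0⟩
    · rcases eq_or_lt_of_le ha with ha0 | ha0
      · right
        have ha0' : a = 0 := ha0.symm
        subst ha0'
        have hd0 : d = 0 := by nlinarith
        have hc0 : c = 0 := by nlinarith
        subst hd0; subst hc0
        have h2 : b * (αC * K - αC * b - δC * K) = 0 := by
          linear_combination (-K) * e2 + αC * b * hdivσ
        rcases mul_eq_zero.mp h2 with h3 | h3
        · exact absurd h3 hb0.ne'
        · refine ⟨rfl, ?_, rfl, rfl⟩
          rw [eq_div_iff hαC']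
          linear_combination -h3
      · exfalso
        have hcpos : 0 < c := by nlinarith [mul_pos (mul_pos hγ₁ hb0) ha0]
        have hdpos : 0 < d := by nlinarith [mul_pos hν₁ hcpos]
        have hchain : γ₁ * α₁ * ν₁ * (b * a) = δV * β₁ * (δCV + ν₁) * a := by
          linear_combination (-(α₁ * ν₁)) * e3 - (α₁ * (ν₁ + δCV)) * e4 - ((ν₁ + δCV) * β₁) * e1
        have hbZ : Z = b := by
          have h4 : (γ₁ * α₁ * ν₁ * b - δV * β₁ * (δCV + ν₁)) * a = 0 := by
            linear_combination hchain
          rcases mul_eq_zero.mp h4 with h5 | h5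
          · rw [hZ, div_eq_iff (by positivity : γ₁ * α₁ * ν₁ ≠ 0)]
            linear_combination -h5
          · exact absurd h5 ha0.ne'
        rw [hbZ] at hlow
        have hdivb : b / K * K = b := div_mul_cancel₀ _ hK'
        have hlow' : αC * (K - b) ≤ δC * K := by
          have h := mul_le_mul_of_nonneg_right hlow hK.le
          calc αC * (K - b) = αC * (1 - b / K) * K := by linear_combination αC * hdivb
            _ ≤ δC * K := h
        have he2K : αC * b * (K - (b + c + d)) - γ₁ * b * a * K - δC * b * K = 0 := by
          linear_combination (-K) * e2 + αC * b * hdivσ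
        nlinarith [mul_le_mul_of_nonneg_left hlow' hb0.le,
          mul_pos (mul_pos (mul_pos hγ₁ hb0) ha0) hK,
          mul_pos (mul_pos hαC hb0) hcpos, mul_pos (mul_pos hαC hb0) hdpos]
  · rintro (⟨rfl, rfl, rfl, rfl⟩ | ⟨rfl, rfl, rfl, rfl⟩)
    · norm_num
    · refine ⟨le_refl _, ?_, le_refl _, le_refl _, by ring, ?_, by ring, by ring⟩
      · exact div_nonneg (mul_nonneg hK.le (by linarith)) hαC.le
      · field_simp
        ring
end

section
/- Consider the steady-state system 0 = α₁x₄ − δ_V x₁, 0 = α_C x₂(1 − (x₂+x₃+x₄)/K) − γ₁x₂x₁ − δ_C x₂, 0 = γ₁x₂x₁ − ν₁x₃ − δ_{CV}x₃, 0 = ν₁x₃ − β₁x₄ with positive parameters and Z = δ_V β₁(δ_{CV}+ν₁)/(γ₁α₁ν₁). If δ_C < α_C(1 − Z/K), then there exist exactly three non-negative solutions: (0,0,0,0), (0, K(α_C−δ_C)/α_C, 0, 0), and (V̄, Z, C̄_V, C̄*_V) where C̄_V = Z(α_C(1 − Z/K) − δ_C)/(ν₁ + δ_{CV} + (β₁+ν₁)α_C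 Z/(β₁K)), C̄*_V = (ν₁/β₁)C̄_V, and V̄ = (α₁ν₁/(δ_V β₁))C̄_V. -/
/-!
The two linear equations express the virus and the producing cells through the infected cells:
`x₄ = (ν₁/β₁) x₃` and `x₁ = (α₁ν₁/(δV β₁)) x₃`. Substituted into the infected-cell equation this
gives, up to a nonzero factor, `x₃ (x₂ - Z) = 0`. If `x₃ = 0`, all but `x₂` vanish and the cell
equation is logistic, with roots `0` and `K (α_C - δ_C)/α_C`. If `x₂ = Z`, the cell equation becomes
affine in `x₃` with nonzero slope, whose root is `C̄_V`. The hypothesis `δ_C < α_C (1 - Z/K)` makes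
both nonzero equilibria nonnegative.
-/

section SteadyState

variable {𝕜 : Type*} [Field 𝕜] {α₁ δV αC K γ₁ δC ν₁ δCV β₁ Z CV x₁ x₂ x₃ x₄ : 𝕜}

lemma linear_steady_equations_iff (hδV : δV ≠ 0) (hβ₁ : β₁ ≠ 0) :
    (0 = α₁ * x₄ - δV * x₁ ∧ 0 = ν₁ * x₃ - β₁ * x₄) ↔
      (x₁ = α₁ * ν₁ / (δV * β₁) * x₃ ∧ x₄ = ν₁ / β₁ * x₃) := by
  constructor
  · rintro ⟨e₁, e₄⟩
    constructor
    · field_simp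
      linear_combination β₁ * e₁ + α₁ * e₄
    · field_simp
      linear_combination e₄
  · rintro ⟨rfl, rfl⟩
    constructor <;> field_simp <;> ring

/-- At steady state each infected cell sustains `α₁ ν₁ / (δV β₁)` virions; `Z` is the level of
uninfected cells at which the infections these cause exactly replace the loss `ν₁ + δCV`. -/
lemma infection_balance_at_Z (hα₁ : α₁ ≠ 0) (hδV : δV ≠ 0) (hγ₁ : γ₁ ≠ 0) (hν₁ : ν₁ ≠ 0)
    (hβ₁ : β₁ ≠ 0)
    (hZ : Z = δV * β₁ * (δCV + ν₁) / (γ₁ * α₁ * ν₁)) :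
    γ₁ * Z * (α₁ * ν₁ / (δV * β₁)) = ν₁ + δCV := by
  rw [hZ]
  field_simp
  ring

lemma infected_balance_iff (hZ : γ₁ * Z * (α₁ * ν₁ / (δV * β₁)) = ν₁ + δCV)
    (hrate : γ₁ * (α₁ * ν₁ / (δV * β₁)) ≠ 0) :
    0 = γ₁ * x₂ * (α₁ * ν₁ / (δV * β₁) * x₃) - ν₁ * x₃ - δCV * x₃ ↔ x₃ = 0 ∨ x₂ = Z := by
  have : γ₁ * x₂ * (α₁ * ν₁ / (δV * β₁) * x₃) - ν₁ * x₃ - δCV * x₃ =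
      γ₁ * (α₁ * ν₁ / (δV * β₁)) * x₃ * (x₂ - Z) := by
    linear_combination x₃ * hZ
  rw [this, eq_comm]
  simp [hrate, sub_eq_zero]

lemma cell_balance_iff (hK : K ≠ 0) (hβ₁ : β₁ ≠ 0)
    (hZ : γ₁ * Z * (α₁ * ν₁ / (δV * β₁)) = ν₁ + δCV)
    (hden : ν₁ + δCV + (β₁ + ν₁) * αC * Z / (β₁ * K) ≠ 0)
    (hCV : CV = Z * (αC * (1 - Z / K) - δC) / (ν₁ + δCV + (β₁ + ν₁) * αC * Z / (β₁ * K))) :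
    0 = αC * Z * (1 - (Z + x₃ + ν₁ / β₁ * x₃) / K) - γ₁ * Z * (α₁ * ν₁ / (δV * β₁) * x₃) - δC * Z
      ↔ x₃ = CV := by
  rw [eq_div_iff hden] at hCV
  have : αC * Z * (1 - (Z + x₃ + ν₁ / β₁ * x₃) / K) - γ₁ * Z * (α₁ * ν₁ / (δV * β₁) * x₃) - δC * Z
      = (ν₁ + δCV + (β₁ + ν₁) * αC * Z / (β₁ * K)) * (CV - x₃) := by
    linear_combination (norm := skip) -hCV - x₃ * hZ
    field_simp
    ring
  rw [this, eq_comm]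
  simp [hden, sub_eq_zero, eq_comm]

lemma logistic_equilibrium_iff (hαC : αC ≠ 0) (hK : K ≠ 0) :
    0 = αC * x₂ * (1 - x₂ / K) - δC * x₂ ↔ x₂ = 0 ∨ x₂ = K * (αC - δC) / αC := by
  have : αC * x₂ * (1 - x₂ / K) - δC * x₂ = αC / K * x₂ * (K * (αC - δC) / αC - x₂) := by
    field_simp
    ring
  rw [this, eq_comm]
  simp [hαC, hK, sub_eq_zero, eq_comm]

theorem steady_state_iff [LinearOrder 𝕜] [IsStrictOrderedRing 𝕜]
    (hα₁ : 0 < α₁) (hδV : 0 < δV) (hαC : 0 < αC) (hK : 0 < K) (hγ₁ : 0 < γ₁) (hν₁ : 0 < ν₁)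
    (hδCV : 0 < δCV) (hβ₁ : 0 < β₁) {CVs Vb : 𝕜}
    (hZ : Z = δV * β₁ * (δCV + ν₁) / (γ₁ * α₁ * ν₁))
    (hCV : CV = Z * (αC * (1 - Z / K) - δC) / (ν₁ + δCV + (β₁ + ν₁) * αC * Z / (β₁ * K)))
    (hCVs : CVs = (ν₁ / β₁) * CV) (hVb : Vb = (α₁ * ν₁ / (δV * β₁)) * CV) :
    (0 = α₁ * x₄ - δV * x₁ ∧ 0 = αC * x₂ * (1 - (x₂ + x₃ + x₄) / K) - γ₁ * x₂ * x₁ - δC * x₂ ∧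
      0 = γ₁ * x₂ * x₁ - ν₁ * x₃ - δCV * x₃ ∧ 0 = ν₁ * x₃ - β₁ * x₄) ↔
    (x₁, x₂, x₃, x₄) = (0, 0, 0, 0) ∨ (x₁, x₂, x₃, x₄) = (0, K * (αC - δC) / αC, 0, 0) ∨
      (x₁, x₂, x₃, x₄) = (Vb, Z, CV, CVs) := by
  have hbal := infection_balance_at_Z hα₁.ne' hδV.ne' hγ₁.ne' hν₁.ne' hβ₁.ne' hZ
  have hZ₀ : 0 ≤ Z := by rw [hZ]; positivity
  have hinf := infected_balance_iff (x₂ := x₂) (x₃ := x₃) hbal (by positivity)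
  have hcell := cell_balance_iff (x₃ := x₃) hK.ne' hβ₁.ne' hbal (by positivity) hCV
  have hlog := logistic_equilibrium_iff (x₂ := x₂) (δC := δC) hαC.ne' hK.ne'
  have hlin := linear_steady_equations_iff (α₁ := α₁) (ν₁ := ν₁) (x₁ := x₁) (x₃ := x₃) (x₄ := x₄)
    hδV.ne' hβ₁.ne'
  subst hCVs hVb
  constructor
  · rintro ⟨e₁, e₂, e₃, e₄⟩
    obtain ⟨rfl, rfl⟩ := hlin.mp ⟨e₁, e₄⟩
    rcases hinf.mp e₃ with rfl | rfl
    · simp only [mul_zero, add_zero, sub_zero] at e₂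
      rcases hlog.mp e₂ with rfl | rfl <;> simp
    · obtain rfl := hcell.mp e₂
      simp
  · rintro (h | h | h) <;> simp only [Prod.mk.injEq] at h <;> obtain ⟨rfl, rfl, rfl, rfl⟩ := h
    · simp
    · simpa using hlog.mpr (Or.inr rfl)
    · obtain ⟨e₁, e₄⟩ := hlin.mpr ⟨rfl, rfl⟩
      exact ⟨e₁, hcell.mpr rfl, hinf.mpr (Or.inr rfl), e₄⟩

end SteadyState

theorem stmt_2_general (α₁ δV αC K γ₁ δC ν₁ δCV β₁ : ℝ)
    (hα₁ : 0 < α₁) (hδV : 0 < δV) (hαC : 0 < αC) (hK : 0 < K) (hγ₁ : 0 < γ₁)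
    (hν₁ : 0 < ν₁) (hδCV : 0 < δCV) (hβ₁ : 0 < β₁)
    (Z : ℝ) (hZ : Z = δV * β₁ * (δCV + ν₁) / (γ₁ * α₁ * ν₁))
    (hcond : δC < αC * (1 - Z / K))
    (CV CVs Vb : ℝ)
    (hCV : CV = Z * (αC * (1 - Z / K) - δC) / (ν₁ + δCV + (β₁ + ν₁) * αC * Z / (β₁ * K)))
    (hCVs : CVs = (ν₁ / β₁) * CV)
    (hVb : Vb = (α₁ * ν₁ / (δV * β₁)) * CV) :
    {p : ℝ × ℝ × ℝ × ℝ |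
        0 ≤ p.1 ∧ 0 ≤ p.2.1 ∧ 0 ≤ p.2.2.1 ∧ 0 ≤ p.2.2.2 ∧
        0 = α₁ * p.2.2.2 - δV * p.1 ∧
        0 = αC * p.2.1 * (1 - (p.2.1 + p.2.2.1 + p.2.2.2) / K) - γ₁ * p.2.1 * p.1 - δC * p.2.1 ∧
        0 = γ₁ * p.2.1 * p.1 - ν₁ * p.2.2.1 - δCV * p.2.2.1 ∧
        0 = ν₁ * p.2.2.1 - β₁ * p.2.2.2} =
      {(0, 0, 0, 0), (0, K * (αC - δC) / αC, 0, 0), (Vb, Z, CV, CVs)} := by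
  have hZ₀ : 0 < Z := by rw [hZ]; positivity
  have hCV₀ : 0 < CV := by
    rw [hCV]
    exact div_pos (mul_pos hZ₀ (sub_pos.mpr hcond)) (by positivity)
  have hδC : δC < αC :=
    hcond.trans_le (mul_le_of_le_one_right hαC.le (by simp only [sub_le_self_iff]; positivity))
  ext p
  have hsteady := steady_state_iff (x₁ := p.1) (x₂ := p.2.1) (x₃ := p.2.2.1) (x₄ := p.2.2.2)
    (δC := δC) hα₁ hδV hαC hK hγ₁ hν₁ hδCV hβ₁ hZ hCV hCVs hVb
  simp only [Set.mem_ofPred_eq, Set.mem_insert_iff, Set.mem_singleton_iff]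
  refine ⟨fun h => hsteady.mp h.2.2.2.2, fun h => ?_⟩
  obtain ⟨h₁, h₂, h₃, h₄⟩ : 0 ≤ p.1 ∧ 0 ≤ p.2.1 ∧ 0 ≤ p.2.2.1 ∧ 0 ≤ p.2.2.2 := by
    rcases h with rfl | rfl | rfl
    · simp
    · exact ⟨le_rfl, div_nonneg (mul_nonneg hK.le (sub_nonneg.2 hδC.le)) hαC.le, le_rfl, le_rfl⟩
    · rw [hVb, hCVs]
      exact ⟨by positivity, hZ₀.le, hCV₀.le, by positivity⟩
  exact ⟨h₁, h₂, h₃, h₄, hsteady.mpr h⟩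

theorem stmt_2 (α₁ δV αC K γ₁ δC ν₁ δCV β₁ : ℝ)
    (hα₁ : 0 < α₁) (hδV : 0 < δV) (hαC : 0 < αC) (hK : 0 < K) (hγ₁ : 0 < γ₁)
    (hδC : 0 < δC) (hν₁ : 0 < ν₁) (hδCV : 0 < δCV) (hβ₁ : 0 < β₁)
    (Z : ℝ) (hZ : Z = δV * β₁ * (δCV + ν₁) / (γ₁ * α₁ * ν₁))
    (hcond : δC < αC * (1 - Z / K))
    (CV CVs Vb : ℝ)
    (hCV : CV = Z * (αC * (1 - Z / K) - δC) / (ν₁ + δCV + (β₁ + ν₁) * αC * Z / (β₁ * K)))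
    (hCVs : CVs = (ν₁ / β₁) * CV)
    (hVb : Vb = (α₁ * ν₁ / (δV * β₁)) * CV) :
    {p : ℝ × ℝ × ℝ × ℝ |
        0 ≤ p.1 ∧ 0 ≤ p.2.1 ∧ 0 ≤ p.2.2.1 ∧ 0 ≤ p.2.2.2 ∧
        0 = α₁ * p.2.2.2 - δV * p.1 ∧
        0 = αC * p.2.1 * (1 - (p.2.1 + p.2.2.1 + p.2.2.2) / K) - γ₁ * p.2.1 * p.1 - δC * p.2.1 ∧
        0 = γ₁ * p.2.1 * p.1 - ν₁ * p.2.2.1 - δCV * p.2.2.1 ∧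
        0 = ν₁ * p.2.2.1 - β₁ * p.2.2.2} =
      {(0, 0, 0, 0), (0, K * (αC - δC) / αC, 0, 0), (Vb, Z, CV, CVs)} :=
  stmt_2_general α₁ δV αC K γ₁ δC ν₁ δCV β₁ hα₁ hδV hαC hK hγ₁ hν₁ hδCV hβ₁ Z hZ hcond CV CVs Vb hCV
    hCVs hVb
end

section
/- Consider the ODE system V' = α₁C*_V − δ_V V, C' = α_C C(1 − (C+C_V+C*_V)/K) − γ₁CV − δ_C C, C_V' = γ₁CV − (ν₁+δ_{CV})C_V, (C*_V)' = ν₁C_V − β₁C*_V with positive parameters and α_C < δ_C. If (V, C, C_V, C*_V) is a non-negative solution defined on [0,∞), then all four components tend to 0 as t → ∞. -/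
/-!
With `a = β₁ / (2 α₁)`, the weighted population `W = a V + C + C_V + C*_V` satisfies
`W' ≤ -λ W` for `λ = min (δ_V, δ_C - α_C, δ_{CV}, β₁ / 2) > 0`: the infection terms `γ₁ C V`
cancel, the logistic factor only lowers the growth of `C` below `(α_C - δ_C) C`, and the weight
`a` makes virus production `a α₁ C*_V` cost at most half of the decay `β₁ C*_V`. Hence `W` decays
exponentially by Grönwall's inequality, and so does each non-negative summand.
-/

open Filter Topology Real Set

theorem le_mul_exp_of_hasDerivAt_le_mul {f f' : ℝ → ℝ} {K : ℝ}
    (hf : ∀ t ≥ 0, HasDerivAt f (f' t) t) (hbound : ∀ t ≥ 0, f' t ≤ K * f t)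
    {t : ℝ} (ht : 0 ≤ t) : f t ≤ f 0 * exp (K * t) := by
  have := le_gronwallBound_of_liminf_deriv_right_le (f := f) (f' := f') (δ := f 0) (K := K)
    (ε := 0) (a := 0) (b := t)
    (fun x hx => (hf x hx.1).continuousAt.continuousWithinAt)
    (fun x hx _ hr => (hf x hx.1).hasDerivWithinAt.liminf_right_slope_le hr) le_rfl
    (fun x hx => by simpa using hbound x hx.1) t ⟨ht, le_rfl⟩
  simpa [gronwallBound_ε0] using this

theorem tendsto_zero_of_hasDerivAt_le_neg_mul {f f' : ℝ → ℝ} {lam : ℝ} (hlam : 0 < lam)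
    (hnn : ∀ t ≥ 0, 0 ≤ f t) (hf : ∀ t ≥ 0, HasDerivAt f (f' t) t)
    (hbound : ∀ t ≥ 0, f' t ≤ -lam * f t) : Tendsto f atTop (𝓝 0) := by
  have hexp : Tendsto (fun t => f 0 * exp (-lam * t)) atTop (𝓝 0) := by
    simpa using (tendsto_exp_atBot.comp
      (tendsto_id.const_mul_atTop_of_neg (neg_neg_of_pos hlam))).const_mul (f 0)
  refine squeeze_zero' ?_ ?_ hexp
  · filter_upwards [eventually_ge_atTop 0] with t ht using hnn t ht
  · filter_upwards [eventually_ge_atTop 0] with t ht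
      using le_mul_exp_of_hasDerivAt_le_mul hf hbound ht

theorem tendsto_zero_of_nonneg_of_mul_le {α : Type*} {l : Filter α} {f W : α → ℝ} {e : ℝ}
    (he : 0 < e) (hnn : ∀ᶠ x in l, 0 ≤ f x) (hle : ∀ᶠ x in l, e * f x ≤ W x)
    (hW : Tendsto W l (𝓝 0)) : Tendsto f l (𝓝 0) := by
  have hef : Tendsto (fun x => e * f x) l (𝓝 0) :=
    squeeze_zero' (hnn.mono fun x hx => mul_nonneg he.le hx) hle hW
  simpa [← mul_assoc, inv_mul_cancel₀ he.ne'] using hef.const_mul e⁻¹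

theorem virus_lyapunov_deriv_le {α₁ δV αC K γ₁ δC ν₁ δCV β₁ a lam v c cv cs : ℝ}
    (hαC : 0 ≤ αC) (hK : 0 ≤ K) (ha : 0 ≤ a) (haβ : a * α₁ + lam ≤ β₁)
    (hlamV : lam ≤ δV) (hlamC : lam ≤ δC - αC) (hlamCV : lam ≤ δCV)
    (hv : 0 ≤ v) (hc : 0 ≤ c) (hcv : 0 ≤ cv) (hcs : 0 ≤ cs) :
    a * (α₁ * cs - δV * v)
        + (αC * c * (1 - (c + cv + cs) / K) - γ₁ * c * v - δC * c)
        + (γ₁ * c * v - (ν₁ + δCV) * cv) + (ν₁ * cv - β₁ * cs)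
      ≤ -lam * (a * v + c + cv + cs) := by
  have hlogistic : 0 ≤ αC * c * ((c + cv + cs) / K) := by positivity
  nlinarith [mul_le_mul_of_nonneg_left hlamV (mul_nonneg ha hv),
    mul_le_mul_of_nonneg_left hlamC hc, mul_le_mul_of_nonneg_left hlamCV hcv,
    mul_le_mul_of_nonneg_left haβ hcs]

theorem stmt_5_general (α₁ δV αC K γ₁ δC ν₁ δCV β₁ : ℝ)
    (hα₁ : 0 < α₁) (hδV : 0 < δV) (hαC : 0 < αC) (hK : 0 < K)
    (hδCV : 0 < δCV) (hβ₁ : 0 < β₁)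
    (hlt : αC < δC)
    (V C CV CVs : ℝ → ℝ)
    (hVpos : ∀ t ≥ 0, 0 ≤ V t) (hCpos : ∀ t ≥ 0, 0 ≤ C t)
    (hCVpos : ∀ t ≥ 0, 0 ≤ CV t) (hCVspos : ∀ t ≥ 0, 0 ≤ CVs t)
    (hV : ∀ t ≥ 0, HasDerivAt V (α₁ * CVs t - δV * V t) t)
    (hC : ∀ t ≥ 0, HasDerivAt C
      (αC * C t * (1 - (C t + CV t + CVs t) / K) - γ₁ * C t * V t - δC * C t) t)
    (hCV : ∀ t ≥ 0, HasDerivAt CV (γ₁ * C t * V t - (ν₁ + δCV) * CV t) t)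
    (hCVs : ∀ t ≥ 0, HasDerivAt CVs (ν₁ * CV t - β₁ * CVs t) t) :
    Tendsto V atTop (nhds 0) ∧ Tendsto C atTop (nhds 0) ∧
      Tendsto CV atTop (nhds 0) ∧ Tendsto CVs atTop (nhds 0) := by
  set a := β₁ / (2 * α₁)
  set lam := min (min δV (δC - αC)) (min δCV (β₁ / 2))
  have ha : 0 < a := by positivity
  have hlam : 0 < lam := lt_min (lt_min hδV (by linarith)) (lt_min hδCV (by positivity))
  have haβ : a * α₁ + lam ≤ β₁ := by
    have : a * α₁ = β₁ / 2 := by simp only [a]; field_simp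
    linarith [min_le_right (min δV (δC - αC)) (min δCV (β₁ / 2)), min_le_right δCV (β₁ / 2)]
  have hW : Tendsto (fun t => a * V t + C t + CV t + CVs t) atTop (𝓝 0) :=
    tendsto_zero_of_hasDerivAt_le_neg_mul hlam
      (fun t ht => by
        linarith [mul_nonneg ha.le (hVpos t ht), hCpos t ht, hCVpos t ht, hCVspos t ht])
      (fun t ht => ((((hV t ht).const_mul a).add (hC t ht)).add (hCV t ht)).add (hCVs t ht))
      (fun t ht => virus_lyapunov_deriv_le hαC.le hK.le ha.le haβ
        ((min_le_left _ _).trans (min_le_left _ _)) ((min_le_left _ _).trans (min_le_right _ _))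
        ((min_le_right _ _).trans (min_le_left _ _))
        (hVpos t ht) (hCpos t ht) (hCVpos t ht) (hCVspos t ht))
  have hpos : ∀ᶠ t in atTop, 0 ≤ V t ∧ 0 ≤ C t ∧ 0 ≤ CV t ∧ 0 ≤ CVs t :=
    (eventually_ge_atTop 0).mono fun t ht => ⟨hVpos t ht, hCpos t ht, hCVpos t ht, hCVspos t ht⟩
  refine ⟨tendsto_zero_of_nonneg_of_mul_le ha (hpos.mono fun t h => h.1) ?_ hW,
    tendsto_zero_of_nonneg_of_mul_le one_pos (hpos.mono fun t h => h.2.1) ?_ hW,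
    tendsto_zero_of_nonneg_of_mul_le one_pos (hpos.mono fun t h => h.2.2.1) ?_ hW,
    tendsto_zero_of_nonneg_of_mul_le one_pos (hpos.mono fun t h => h.2.2.2) ?_ hW⟩ <;>
  · filter_upwards [hpos] with t ⟨hv, hc, hcv, hcs⟩
    linarith [mul_nonneg ha.le hv]

theorem stmt_5 (α₁ δV αC K γ₁ δC ν₁ δCV β₁ : ℝ)
    (hα₁ : 0 < α₁) (hδV : 0 < δV) (hαC : 0 < αC) (hK : 0 < K) (hγ₁ : 0 < γ₁)
    (hδC : 0 < δC) (hν₁ : 0 < ν₁) (hδCV : 0 < δCV) (hβ₁ : 0 < β₁)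
    (hlt : αC < δC)
    (V C CV CVs : ℝ → ℝ)
    (hVpos : ∀ t ≥ 0, 0 ≤ V t) (hCpos : ∀ t ≥ 0, 0 ≤ C t)
    (hCVpos : ∀ t ≥ 0, 0 ≤ CV t) (hCVspos : ∀ t ≥ 0, 0 ≤ CVs t)
    (hV : ∀ t ≥ 0, HasDerivAt V (α₁ * CVs t - δV * V t) t)
    (hC : ∀ t ≥ 0, HasDerivAt C
      (αC * C t * (1 - (C t + CV t + CVs t) / K) - γ₁ * C t * V t - δC * C t) t)
    (hCV : ∀ t ≥ 0, HasDerivAt CV (γ₁ * C t * V t - (ν₁ + δCV) * CV t) t)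
    (hCVs : ∀ t ≥ 0, HasDerivAt CVs (ν₁ * CV t - β₁ * CVs t) t) :
    Tendsto V atTop (nhds 0) ∧ Tendsto C atTop (nhds 0) ∧
      Tendsto CV atTop (nhds 0) ∧ Tendsto CVs atTop (nhds 0) :=
  stmt_5_general α₁ δV αC K γ₁ δC ν₁ δCV β₁ hα₁ hδV hαC hK hδCV hβ₁ hlt V C CV CVs hVpos hCpos
    hCVpos hCVspos hV hC hCV hCVs
end

section
/- If α_C(1 − Z/K) ≤ δ_C, then the coexistence steady state does not exist: there is no solution of the steady-state system 0 = α₁x₄ − δ_V x₁, 0 = α_C x₂(1 − (x₂+x₃+x₄)/K) − γ₁x₂x₁ − δ_C x₂, 0 = γ₁x₂x₁ − (ν₁+δ_{CV})x₃, 0 = ν₁x₃ − β₁x₄ with all components strictly positive. -/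
theorem stmt_19 (α₁ δV αC K γ₁ δC ν₁ δCV β₁ : ℝ)
    (hα₁ : 0 < α₁) (hδV : 0 < δV) (hαC : 0 < αC) (hK : 0 < K) (hγ₁ : 0 < γ₁)
    (hδC : 0 < δC) (hν₁ : 0 < ν₁) (hδCV : 0 < δCV) (hβ₁ : 0 < β₁)
    (Z : ℝ) (hZ : Z = δV * β₁ * (δCV + ν₁) / (γ₁ * α₁ * ν₁))
    (hcond : αC * (1 - Z / K) ≤ δC) :
    ¬∃ x₁ x₂ x₃ x₄ : ℝ,
      0 < x₁ ∧ 0 < x₂ ∧ 0 < x₃ ∧ 0 < x₄ ∧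
      0 = α₁ * x₄ - δV * x₁ ∧
      0 = αC * x₂ * (1 - (x₂ + x₃ + x₄) / K) - γ₁ * x₂ * x₁ - δC * x₂ ∧
      0 = γ₁ * x₂ * x₁ - (ν₁ + δCV) * x₃ ∧
      0 = ν₁ * x₃ - β₁ * x₄ := by
  rintro ⟨x₁, x₂, x₃, x₄, h1, h2, h3, h4, e1, e2, e3, e4⟩
  -- x₂ = Z
  have hx2 : x₂ = Z := by
    have a : δV * x₁ = α₁ * x₄ := by linarith
    have b : ν₁ * x₃ = β₁ * x₄ := by linarith
    have c : γ₁ * x₂ * x₁ = (ν₁ + δCV) * x₃ := by linarith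
    have hkey : x₂ * (γ₁ * α₁ * ν₁) * x₄ = δV * β₁ * (δCV + ν₁) * x₄ := by
      linear_combination (-(γ₁ * x₂ * ν₁)) * a + (δV * ν₁) * c + (δV * (ν₁ + δCV)) * b
    have hkey2 : x₂ * (γ₁ * α₁ * ν₁) = δV * β₁ * (δCV + ν₁) :=
      mul_right_cancel₀ (ne_of_gt h4) hkey
    have hd : γ₁ * α₁ * ν₁ ≠ 0 := by positivity
    rw [hZ, eq_div_iff hd]
    linarith
  -- from e2, dividing by x₂ > 0: γ₁ x₁ = αC(1 - S/K) - δC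
  have key : αC * (1 - (x₂ + x₃ + x₄) / K) - γ₁ * x₁ - δC = 0 := by
    have : x₂ * (αC * (1 - (x₂ + x₃ + x₄) / K) - γ₁ * x₁ - δC) = 0 := by ring_nf; ring_nf at e2; linarith
    rcases mul_eq_zero.mp this with h | h
    · exact absurd h (ne_of_gt h2)
    · exact h
  -- then αC(1 - S/K) > δC ≥ αC(1 - Z/K), so S < Z = x₂, contradiction
  have hγx : 0 < γ₁ * x₁ := mul_pos hγ₁ h1
  have hS : αC * (1 - (x₂ + x₃ + x₄) / K) > αC * (1 - Z / K) := by linarith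
  have : (x₂ + x₃ + x₄) / K < Z / K := by
    nlinarith
  have : x₂ + x₃ + x₄ < Z := by
    exact (div_lt_div_iff_of_pos_right hK).mp this
  linarith [hx2]
end
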